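/- Preservation of atomic arity by extended parallel reduction (subject reduction for arities, general form): if T₁ has atomic arity A in L₁, T₁ reduces to T₂ in one extended parallel step in L₁, and L₁ reduces to L₂ in one extended parallel step, then T₂ has atomic arity A in L₂. -/

import Mathlib

inductive Bk | abbr | abst
deriving DecidableEq

inductive Fk | appl | cast
deriving DecidableEq

inductive Tm
| sort : Nat → Tm
| lref : Nat → Tm
| bind : Bk → Tm → Tm → Tm
| flat : Fk → Tm → Tm → Tm
deriving DecidableEq

inductive Lift : Nat → Nat → Tm → Tm → Prop
| sort (l m k) : Lift l m (.sort k) (.sort k)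
| lt {l m i} : i < l → Lift l m (.lref i) (.lref i)
| ge {l m i} : l ≤ i → Lift l m (.lref i) (.lref (i + m))
| bind {l m b W₁ W₂ T₁ T₂} : Lift l m W₁ W₂ → Lift (l + 1) m T₁ T₂ →
    Lift l m (.bind b W₁ T₁) (.bind b W₂ T₂)
| flat {l m f V₁ V₂ T₁ T₂} : Lift l m V₁ V₂ → Lift l m T₁ T₂ →
    Lift l m (.flat f V₁ T₁) (.flat f V₂ T₂)

inductive Env
| null : Env
| pair : Env → Bk → Tm → Env
deriving DecidableEq

inductive Drop : Nat → Nat → Env → Env → Prop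
| atom (l) : Drop l 0 .null .null
| pair {L₁ L₂ b W} : Drop 0 0 L₁ L₂ → Drop 0 0 (.pair L₁ b W) (.pair L₂ b W)
| drop {m L₁ L₂ b W} : Drop 0 m L₁ L₂ → Drop 0 (m + 1) (.pair L₁ b W) L₂
| skip {l m L₁ L₂ b W₁ W₂} : Drop l m L₁ L₂ → Lift l m W₂ W₁ →
    Drop (l + 1) m (.pair L₁ b W₁) (.pair L₂ b W₂)

inductive Aa | star | impl : Aa → Aa → Aa
deriving DecidableEq

inductive Aaa : Env → Tm → Aa → Prop
| sort {L k} : Aaa L (.sort k) .star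
| lref {L K b W B i} : Drop 0 i L (.pair K b W) → Aaa K W B → Aaa L (.lref i) B
| abbr {L V T B A} : Aaa L V B → Aaa (.pair L .abbr V) T A →
    Aaa L (.bind .abbr V T) A
| abst {L W T B A} : Aaa L W B → Aaa (.pair L .abst W) T A →
    Aaa L (.bind .abst W T) (.impl B A)
| appl {L V T B A} : Aaa L V B → Aaa L T (.impl B A) → Aaa L (.flat .appl V T) A
| cast {L U T A} : Aaa L U A → Aaa L T A → Aaa L (.flat .cast U T) A

inductive Cpx (h g : Nat → Nat) : Env → Tm → Tm → Prop
| sort {L k} : Cpx h g L (.sort k) (.sort k)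
| lref {L i} : Cpx h g L (.lref i) (.lref i)
| st {L k d} : g k = d + 1 → Cpx h g L (.sort k) (.sort (h k))
| bind {L b W₁ W₂ T₁ T₂} : Cpx h g L W₁ W₂ → Cpx h g (.pair L b W₁) T₁ T₂ →
    Cpx h g L (.bind b W₁ T₁) (.bind b W₂ T₂)
| flat {L f V₁ V₂ T₁ T₂} : Cpx h g L V₁ V₂ → Cpx h g L T₁ T₂ →
    Cpx h g L (.flat f V₁ T₁) (.flat f V₂ T₂)
| delta {L K b W₁ W₂ V₂ i} : Drop 0 i L (.pair K b W₁) → Cpx h g K W₁ W₂ →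
    Lift 0 (i + 1) W₂ V₂ → Cpx h g L (.lref i) V₂
| beta {L V₁ V₂ W₁ W₂ T₁ T₂} : Cpx h g L V₁ V₂ → Cpx h g L W₁ W₂ →
    Cpx h g (.pair L .abst W₁) T₁ T₂ →
    Cpx h g L (.flat .appl V₁ (.bind .abst W₁ T₁))
      (.bind .abbr (.flat .cast W₂ V₂) T₂)
| zeta {L V U₁ U₂ T₂} : Cpx h g (.pair L .abbr V) U₁ U₂ → Lift 0 1 T₂ U₂ →
    Cpx h g L (.bind .abbr V U₁) T₂
| eps {L U T₁ T₂} : Cpx h g L T₁ T₂ → Cpx h g L (.flat .cast U T₁) T₂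
| ee {L U₁ U₂ T} : Cpx h g L U₁ U₂ → Cpx h g L (.flat .cast U₁ T) U₂
| theta {L V₁ V₂ W₂ U₁ U₂ T₁ T₂} : Cpx h g L V₁ V₂ → Lift 0 1 V₂ W₂ →
    Cpx h g L U₁ U₂ → Cpx h g (.pair L .abbr U₁) T₁ T₂ →
    Cpx h g L (.flat .appl V₁ (.bind .abbr U₁ T₁))
      (.bind .abbr U₂ (.flat .appl W₂ T₂))

inductive Lpx (h g : Nat → Nat) : Env → Env → Prop
| atom : Lpx h g .null .null
| pair {L₁ L₂ b W₁ W₂} : Lpx h g L₁ L₂ → Cpx h g L₁ W₁ W₂ →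
    Lpx h g (.pair L₁ b W₁) (.pair L₂ b W₂)

/-!
Induction on the arity derivation, inverting the reduction step at each node. Sort steps are
harmless since every sort has arity ⋆. A δ-step replaces a reference by a relocated reduct of the
type it points to, and a ζ-step removes an unused abbreviation: both are handled by the invariance
of arities under lifting. A β-step turns the entry λW into δ(ⓝW.V), which has the arity of W, and
arities are preserved when environment entries are refined in this way.
-/

namespace Drop

theorem refl : ∀ L : Env, Drop 0 0 L L
  | .null => .atom 0
  | .pair L _ _ => .pair (refl L)

theorem eq_of_zero_zero : ∀ {L K : Env}, Drop 0 0 L K → K = L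
  | _, _, .atom _ => rfl
  | _, _, .pair h => by rw [eq_of_zero_zero h]

theorem unique : ∀ {i : ℕ} {L K₁ K₂ : Env}, Drop 0 i L K₁ → Drop 0 i L K₂ → K₁ = K₂
  | 0, _, _, _, h₁, h₂ => by rw [eq_of_zero_zero h₁, eq_of_zero_zero h₂]
  | _ + 1, _, _, _, .drop h₁, .drop h₂ => unique h₁ h₂

theorem succ_of_pair : ∀ {i : ℕ} {L K : Env} {b : Bk} {W : Tm},
    Drop 0 i L (.pair K b W) → Drop 0 (i + 1) L K
  | 0, _, _, _, _, h => by rw [← eq_of_zero_zero h]; exact .drop (refl _)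
  | _ + 1, _, _, _, _, .drop h => .drop (succ_of_pair h)

theorem conf_lt : ∀ {i j m : ℕ} {L₁ L₂ K₂ : Env} {b : Bk} {W₂ : Tm},
    Drop (i + j + 1) m L₁ L₂ → Drop 0 i L₂ (.pair K₂ b W₂) →
    ∃ K₁ W₁, Drop 0 i L₁ (.pair K₁ b W₁) ∧ Drop j m K₁ K₂ ∧ Lift j m W₂ W₁
  | 0, _, _, _, _, _, _, _, .skip hd hW, h => by
    obtain ⟨rfl, rfl, rfl⟩ := Env.pair.inj (eq_of_zero_zero h)
    exact ⟨_, _, .pair (refl _), by simpa using hd, by simpa using hW⟩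
  | i + 1, j, _, _, _, _, _, _, .skip hd _, .drop h => by
    rw [Nat.add_right_comm i 1 j] at hd
    obtain ⟨K₁, W₁, h₁, hd', hW⟩ := conf_lt hd h
    exact ⟨K₁, W₁, .drop h₁, hd', hW⟩

theorem trans_lt : ∀ {i j m : ℕ} {L₁ L₂ K₁ : Env} {b : Bk} {W₁ : Tm},
    Drop (i + j + 1) m L₁ L₂ → Drop 0 i L₁ (.pair K₁ b W₁) →
    ∃ K₂ W₂, Drop 0 i L₂ (.pair K₂ b W₂) ∧ Drop j m K₁ K₂ ∧ Lift j m W₂ W₁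
  | 0, _, _, _, _, _, _, _, .skip hd hW, h => by
    obtain ⟨rfl, rfl, rfl⟩ := Env.pair.inj (eq_of_zero_zero h)
    exact ⟨_, _, .pair (refl _), by simpa using hd, by simpa using hW⟩
  | i + 1, j, _, _, _, _, _, _, .skip hd _, .drop h => by
    rw [Nat.add_right_comm i 1 j] at hd
    obtain ⟨K₂, W₂, h₂, hd', hW⟩ := trans_lt hd h
    exact ⟨K₂, W₂, .drop h₂, hd', hW⟩

end Drop

theorem Drop.conf_ge {l m : ℕ} {L₁ L₂ : Env} (hd : Drop l m L₁ L₂) :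
    ∀ {i : ℕ} {K : Env}, Drop 0 i L₂ K → l ≤ i → Drop 0 (i + m) L₁ K := by
  induction hd with
  | atom => exact fun h _ => h
  | pair hd => exact fun h _ => by rwa [Drop.eq_of_zero_zero hd] at h
  | drop _ ih => exact fun h _ => .drop (ih h (Nat.zero_le _))
  | skip _ _ ih =>
    intro i K h hi
    obtain ⟨i, rfl⟩ : ∃ i', i = i' + 1 := ⟨i - 1, by omega⟩
    cases h with
    | drop h => rw [Nat.add_right_comm]; exact .drop (ih h (by omega))

theorem Drop.trans_ge {l m : ℕ} {L₁ L₂ : Env} (hd : Drop l m L₁ L₂) :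
    ∀ {i : ℕ} {K : Env}, Drop 0 (i + m) L₁ K → l ≤ i → Drop 0 i L₂ K := by
  induction hd with
  | atom => exact fun h _ => h
  | pair hd => exact fun h _ => by rwa [Drop.eq_of_zero_zero hd]
  | drop _ ih => intro i K h _; cases h with | drop h => exact ih h (Nat.zero_le _)
  | skip _ _ ih =>
    intro i K h hi
    obtain ⟨i, rfl⟩ : ∃ i', i = i' + 1 := ⟨i - 1, by omega⟩
    rw [Nat.add_right_comm] at h
    cases h with
    | drop h => exact .drop (ih h (by omega))

namespace Aaa

theorem lift {L₂ : Env} {T₂ : Tm} {A : Aa} (ha : Aaa L₂ T₂ A) {l m : ℕ} {L₁ : Env} {T₁ : Tm}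
    (hd : Drop l m L₁ L₂) (hT : Lift l m T₂ T₁) : Aaa L₁ T₁ A := by
  induction ha generalizing l m L₁ T₁ with
  | sort => cases hT; exact .sort
  | lref hK hW ih =>
    cases hT with
    | lt hi =>
      obtain ⟨j, rfl⟩ := Nat.exists_eq_add_of_lt hi
      obtain ⟨K₁, W₁, hK₁, hd', hW'⟩ := hd.conf_lt hK
      exact .lref hK₁ (ih hd' hW')
    | ge hi => exact .lref (hd.conf_ge hK hi) hW
  | abbr _ _ ihV ihT => cases hT with | bind hV hT => exact .abbr (ihV hd hV) (ihT (hd.skip hV) hT)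
  | abst _ _ ihW ihT => cases hT with | bind hW hT => exact .abst (ihW hd hW) (ihT (hd.skip hW) hT)
  | appl _ _ ihV ihT => cases hT with | flat hV hT => exact .appl (ihV hd hV) (ihT hd hT)
  | cast _ _ ihU ihT => cases hT with | flat hU hT => exact .cast (ihU hd hU) (ihT hd hT)

theorem of_lift {L₁ : Env} {T₁ : Tm} {A : Aa} (ha : Aaa L₁ T₁ A) {l m : ℕ} {L₂ : Env} {T₂ : Tm}
    (hd : Drop l m L₁ L₂) (hT : Lift l m T₂ T₁) : Aaa L₂ T₂ A := by
  induction ha generalizing l m L₂ T₂ with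
  | sort => cases hT; exact .sort
  | lref hK hW ih =>
    cases hT with
    | lt hi =>
      obtain ⟨j, rfl⟩ := Nat.exists_eq_add_of_lt hi
      obtain ⟨K₂, W₂, hK₂, hd', hW'⟩ := hd.trans_lt hK
      exact .lref hK₂ (ih hd' hW')
    | ge hi => exact .lref (hd.trans_ge hK hi) hW
  | abbr _ _ ihV ihT => cases hT with | bind hV hT => exact .abbr (ihV hd hV) (ihT (hd.skip hV) hT)
  | abst _ _ ihW ihT => cases hT with | bind hW hT => exact .abst (ihW hd hW) (ihT (hd.skip hW) hT)
  | appl _ _ ihV ihT => cases hT with | flat hV hT => exact .appl (ihV hd hV) (ihT hd hT)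
  | cast _ _ ihU ihT => cases hT with | flat hU hT => exact .cast (ihU hd hU) (ihT hd hT)

theorem unique {L : Env} {T : Tm} {A₁ A₂ : Aa} (h₁ : Aaa L T A₁) (h₂ : Aaa L T A₂) : A₁ = A₂ := by
  induction h₁ generalizing A₂ with
  | sort => cases h₂; rfl
  | lref hK _ ih =>
    cases h₂ with
    | lref hK' hW' =>
      obtain ⟨rfl, rfl, rfl⟩ := Env.pair.inj (hK.unique hK')
      exact ih hW'
  | abbr _ _ ihV ihT => cases h₂ with | abbr hV hT => cases ihV hV; exact ihT hT
  | abst _ _ ihW ihT => cases h₂ with | abst hW hT => rw [ihW hW, ihT hT]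
  | appl _ _ ihV ihT => cases h₂ with | appl hV hT => cases ihV hV; exact (Aa.impl.inj (ihT hT)).2
  | cast _ _ _ ihT => cases h₂ with | cast _ hT => exact ihT hT

end Aaa

/-- `LSubA L₁ L₂`: `L₁` refines `L₂` for atomic arities. -/
inductive LSubA : Env → Env → Prop
| atom : LSubA .null .null
| pair {L₁ L₂ b W} : LSubA L₁ L₂ → LSubA (.pair L₁ b W) (.pair L₂ b W)
| beta {L₁ L₂ W V B} : Aaa L₁ (.flat .cast W V) B → Aaa L₂ W B → LSubA L₁ L₂ →
    LSubA (.pair L₁ .abbr (.flat .cast W V)) (.pair L₂ .abst W)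

namespace LSubA

theorem refl : ∀ L : Env, LSubA L L
  | .null => .atom
  | .pair L _ _ => .pair (refl L)

theorem drop {L₁ L₂ : Env} (hs : LSubA L₁ L₂) {i : ℕ} {K₂ : Env} {b : Bk} {W : Tm}
    (hd : Drop 0 i L₂ (.pair K₂ b W)) :
    (∃ K₁, Drop 0 i L₁ (.pair K₁ b W) ∧ LSubA K₁ K₂) ∨
    (∃ K₁ V B, b = .abst ∧ Drop 0 i L₁ (.pair K₁ .abbr (.flat .cast W V)) ∧
      LSubA K₁ K₂ ∧ Aaa K₁ (.flat .cast W V) B ∧ Aaa K₂ W B) := by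
  induction hs generalizing i with
  | atom => cases hd
  | pair hs ih =>
    cases hd with
    | pair hd => obtain rfl := Drop.eq_of_zero_zero hd; exact .inl ⟨_, .pair (Drop.refl _), hs⟩
    | drop hd =>
      rcases ih hd with ⟨K₁, hK, hs'⟩ | ⟨K₁, V, B, rfl, hK, hs', hC, hW⟩
      · exact .inl ⟨K₁, .drop hK, hs'⟩
      · exact .inr ⟨K₁, V, B, rfl, .drop hK, hs', hC, hW⟩
  | beta hC hW hs ih =>
    cases hd with
    | pair hd =>
      obtain rfl := Drop.eq_of_zero_zero hd
      exact .inr ⟨_, _, _, rfl, .pair (Drop.refl _), hs, hC, hW⟩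
    | drop hd =>
      rcases ih hd with ⟨K₁, hK, hs'⟩ | ⟨K₁, V, B, rfl, hK, hs', hC, hW⟩
      · exact .inl ⟨K₁, .drop hK, hs'⟩
      · exact .inr ⟨K₁, V, B, rfl, .drop hK, hs', hC, hW⟩

end LSubA

theorem Aaa.of_lSubA {L₂ : Env} {T : Tm} {A : Aa} (ha : Aaa L₂ T A) {L₁ : Env}
    (hs : LSubA L₁ L₂) : Aaa L₁ T A := by
  induction ha generalizing L₁ with
  | sort => exact .sort
  | lref hK hW ih =>
    rcases hs.drop hK with ⟨K₁, hK₁, hs'⟩ | ⟨K₁, V, B, -, hK₁, -, hC, hW'⟩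
    · exact .lref hK₁ (ih hs')
    · exact .lref hK₁ (hW'.unique hW ▸ hC)
  | abbr _ _ ihV ihT => exact .abbr (ihV hs) (ihT hs.pair)
  | abst _ _ ihW ihT => exact .abst (ihW hs) (ihT hs.pair)
  | appl _ _ ihV ihT => exact .appl (ihV hs) (ihT hs)
  | cast _ _ ihU ihT => exact .cast (ihU hs) (ihT hs)

theorem Aaa.beta {L : Env} {V W T : Tm} {A B : Aa} (hV : Aaa L V B)
    (hWT : Aaa L (.bind .abst W T) (.impl B A)) : Aaa L (.bind .abbr (.flat .cast W V) T) A := by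
  cases hWT with
  | abst hW hT => exact .abbr (.cast hW hV) (hT.of_lSubA (.beta (.cast hW hV) hW (.refl _)))

theorem Aaa.theta {L : Env} {V W U T : Tm} {A B : Aa} (hV : Aaa L V B) (hVW : Lift 0 1 V W)
    (hUT : Aaa L (.bind .abbr U T) (.impl B A)) :
    Aaa L (.bind .abbr U (.flat .appl W T)) A := by
  cases hUT with
  | abbr hU hT => exact .abbr hU (.appl (hV.lift (.drop (.refl _)) hVW) hT)

section Reduction

variable {h g : ℕ → ℕ}

theorem Cpx.refl : ∀ (T : Tm) (L : Env), Cpx h g L T T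
  | .sort _, _ => .sort
  | .lref _, _ => .lref
  | .bind _ W T, L => .bind (refl W L) (refl T _)
  | .flat _ V T, L => .flat (refl V L) (refl T L)

theorem Lpx.exists_drop {L₁ L₂ : Env} (hl : Lpx h g L₁ L₂) {i : ℕ} {K₁ : Env} {b : Bk} {W₁ : Tm}
    (hd : Drop 0 i L₁ (.pair K₁ b W₁)) :
    ∃ K₂ W₂, Drop 0 i L₂ (.pair K₂ b W₂) ∧ Lpx h g K₁ K₂ ∧ Cpx h g K₁ W₁ W₂ := by
  induction hl generalizing i with
  | atom => cases hd
  | pair hl hW ih =>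
    cases hd with
    | pair hd => obtain rfl := Drop.eq_of_zero_zero hd; exact ⟨_, _, .pair (.refl _), hl, hW⟩
    | drop hd =>
      obtain ⟨K₂, W₂, hK, hl', hW'⟩ := ih hd
      exact ⟨K₂, W₂, .drop hK, hl', hW'⟩

def ArityStable (h g : ℕ → ℕ) (L : Env) (T : Tm) (A : Aa) : Prop :=
  ∀ ⦃L' : Env⦄ ⦃T' : Tm⦄, Cpx h g L T T' → Lpx h g L L' → Aaa L' T' A

namespace ArityStable

theorem sort {L : Env} {k : ℕ} : ArityStable h g L (.sort k) .star := by
  intro L' T' ht _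
  cases ht <;> exact .sort

theorem lref {L K : Env} {b : Bk} {W : Tm} {B : Aa} {i : ℕ} (hK : Drop 0 i L (.pair K b W))
    (hW : ArityStable h g K W B) : ArityStable h g L (.lref i) B := by
  intro L' T' ht hl
  obtain ⟨K', W', hK', hlK, hWW'⟩ := hl.exists_drop hK
  cases ht with
  | lref => exact .lref hK' (hW hWW' hlK)
  | delta hK₀ hW₀ hV =>
    obtain ⟨rfl, rfl, rfl⟩ := Env.pair.inj (hK.unique hK₀)
    exact (hW hW₀ hlK).lift hK'.succ_of_pair hV

theorem abbr {L : Env} {V T : Tm} {A B : Aa} (hV : ArityStable h g L V B)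
    (hT : ArityStable h g (.pair L .abbr V) T A) : ArityStable h g L (.bind .abbr V T) A := by
  intro L' T' ht hl
  cases ht with
  | bind hVV' hTT' => exact .abbr (hV hVV' hl) (hT hTT' (hl.pair hVV'))
  | zeta hUU' hTU => exact (hT hUU' (hl.pair (.refl _ _))).of_lift (.drop (.refl _)) hTU

theorem abst {L : Env} {W T : Tm} {A B : Aa} (hW : ArityStable h g L W B)
    (hT : ArityStable h g (.pair L .abst W) T A) :
    ArityStable h g L (.bind .abst W T) (.impl B A) := by
  intro L' T' ht hl
  cases ht with
  | bind hWW' hTT' => exact .abst (hW hWW' hl) (hT hTT' (hl.pair hWW'))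

theorem appl {L : Env} {V T : Tm} {A B : Aa} (hV : ArityStable h g L V B)
    (hT : ArityStable h g L T (.impl B A)) : ArityStable h g L (.flat .appl V T) A := by
  intro L' T' ht hl
  cases ht with
  | flat hVV' hTT' => exact .appl (hV hVV' hl) (hT hTT' hl)
  | beta hVV' hWW' hTT' => exact (hV hVV' hl).beta (hT (.bind hWW' hTT') hl)
  | theta hVV' hVW hUU' hTT' => exact (hV hVV' hl).theta hVW (hT (.bind hUU' hTT') hl)

theorem cast {L : Env} {U T : Tm} {A : Aa} (hU : ArityStable h g L U A)
    (hT : ArityStable h g L T A) : ArityStable h g L (.flat .cast U T) A := by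
  intro L' T' ht hl
  cases ht with
  | flat hUU' hTT' => exact .cast (hU hUU' hl) (hT hTT' hl)
  | eps hTT' => exact hT hTT' hl
  | ee hUU' => exact hU hUU' hl

end ArityStable

theorem Aaa.arityStable {L : Env} {T : Tm} {A : Aa} (ha : Aaa L T A) : ArityStable h g L T A := by
  induction ha with
  | sort => exact .sort
  | lref hK _ hW => exact .lref hK hW
  | abbr _ _ hV hT => exact .abbr hV hT
  | abst _ _ hW hT => exact .abst hW hT
  | appl _ _ hV hT => exact .appl hV hT
  | cast _ _ hU hT => exact .cast hU hT

end Reduction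

theorem cpx_lpx_aaa_conf_general {h g : Nat → Nat}
    {L₁ L₂ : Env} {T₁ T₂ : Tm} {A : Aa}
    (ha : Aaa L₁ T₁ A) (ht : Cpx h g L₁ T₁ T₂) (hl : Lpx h g L₁ L₂) :
    Aaa L₂ T₂ A :=
  ha.arityStable ht hl

theorem cpx_lpx_aaa_conf {h g : Nat → Nat}
    (hh : ∀ k, k < h k) (hg : ∀ k d, g k = d + 1 → g (h k) = d)
    {L₁ L₂ : Env} {T₁ T₂ : Tm} {A : Aa}
    (ha : Aaa L₁ T₁ A) (ht : Cpx h g L₁ T₁ T₂) (hl : Lpx h g L₁ L₂) :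
    Aaa L₂ T₂ A :=
  cpx_lpx_aaa_conf_general ha ht hl
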